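/- Crucial observation: for any φ = (φ₁,…,φ_n) ∈ S_n with φ₀ := 0 and N = n+1, the multiset {σ_nⁱ(φ)_j : i = 0,…,n, j = 1,…,n} (of size Nn) equals the multiset sum over all pairs 0 ≤ k < l ≤ n of the two-element multisets {φ_l - φ_k, 1 - (φ_l - φ_k)}. -/

import Mathlib

/-- The affine shift map `σ_n : (θ₁,…,θ_n) ↦ (1-θ_n, θ₁+1-θ_n, …, θ_{n-1}+1-θ_n)`. -/
def shiftMap (n : ℕ) (hn : 0 < n) (θ : Fin n → ℝ) : Fin n → ℝ :=
  fun i =>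
    if i.1 = 0 then 1 - θ ⟨n - 1, Nat.sub_lt hn one_pos⟩
    else θ ⟨i.1 - 1, Nat.lt_of_le_of_lt (Nat.sub_le i.1 1) i.isLt⟩ + 1 -
      θ ⟨n - 1, Nat.sub_lt hn one_pos⟩

/-- The open simplex `S_n = {φ | 0 < φ₁ < … < φ_n < 1}`. -/
def simplexSet (n : ℕ) (hn : 0 < n) : Set (Fin n → ℝ) :=
  {θ | StrictMono θ ∧ 0 < θ ⟨0, hn⟩ ∧ θ ⟨n - 1, Nat.sub_lt hn one_pos⟩ < 1}

/-!
Put `Φ₀ = 0, Φ₁ = φ₁, …, Φ_n = φ_n` on the circle `ℝ/ℤ`. The shift map re-bases this configuration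
at its predecessor point: if `θ` lists the counterclockwise arc lengths from `Φ_c` to the other
`n` points in cyclic order, then `σ_n θ` lists them from `Φ_{c-1}`. Hence the orbit
`φ, σ_n φ, …, σ_nⁿ φ` lists, as `c` runs over all `n + 1` base points, the arcs from `Φ_c` to every
`Φ_a` with `a ≠ c`. The two arcs between `Φ_k` and `Φ_l` (`k < l`) are `Φ_l - Φ_k` and
`1 - (Φ_l - Φ_k)`.
-/

open Finset

namespace Fin

lemma le_sub_one_iff_of_ne {n : ℕ} {a c : Fin (n + 1)} (h : a ≠ c) :
    a ≤ c - 1 ↔ a ≤ c ∨ c = 0 := by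
  have hval : a.val ≠ c.val := Fin.val_ne_iff.mpr h
  rw [le_iff_val_le_val, le_iff_val_le_val, coe_sub_one]
  split_ifs with hc
  · simp [hc, Nat.le_of_lt_succ a.isLt]
  · have : c.val ≠ 0 := Fin.val_ne_iff.mpr hc
    simp only [hc, or_false]
    omega

lemma sub_one_le_self_iff {n : ℕ} (c : Fin (n + 2)) : c - 1 ≤ c ↔ c ≠ 0 :=
  (show c - 1 ≠ c by simp).le_iff_lt.trans (sub_one_lt_iff.trans pos_iff_ne_zero)

lemma sum_succ_add_eq_sum_ne {M : Type*} [AddCommMonoid M] {n : ℕ} (f : Fin (n + 1) → M)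
    (c : Fin (n + 1)) : ∑ j : Fin n, f (j.succ + c) = ∑ a ∈ univ.filter (· ≠ c), f a := by
  calc ∑ j : Fin n, f (j.succ + c) = ∑ d, if d ≠ 0 then f (d + c) else 0 := by
        simp [sum_univ_succ, succ_ne_zero]
    _ = ∑ a, if a ≠ c then f a else 0 :=
        Fintype.sum_equiv (Equiv.addRight c) _ _ fun d => by simp
    _ = ∑ a ∈ univ.filter (· ≠ c), f a := (sum_filter _ _).symm

end Fin

lemma Finset.sum_sum_ne_eq_sum_lt {α M : Type*} [Fintype α] [LinearOrder α] [AddCommMonoid M]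
    (g : α → α → M) :
    ∑ c, ∑ a ∈ univ.filter (· ≠ c), g a c =
      ∑ p ∈ univ.filter (fun p : α × α => p.1 < p.2), (g p.2 p.1 + g p.1 p.2) := by
  calc ∑ c, ∑ a ∈ univ.filter (· ≠ c), g a c
        = ∑ c, ∑ a, ((if c < a then g a c else 0) + (if a < c then g a c else 0)) := by
        refine sum_congr rfl fun c _ => ?_
        rw [sum_filter]
        refine sum_congr rfl fun a _ => ?_
        rcases lt_trichotomy a c with h | rfl | h
        · simp [h, h.ne, h.not_gt]
        · simp
        · simp [h, h.ne', h.not_gt]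
    _ = ∑ k, ∑ l, ((if k < l then g l k else 0) + (if k < l then g k l else 0)) := by
        simp_rw [sum_add_distrib]
        rw [sum_comm (f := fun c a => if a < c then g a c else 0)]
    _ = ∑ p ∈ univ.filter (fun p : α × α => p.1 < p.2), (g p.2 p.1 + g p.1 p.2) := by
        rw [sum_filter, Fintype.sum_prod_type]
        simp_rw [ite_add_ite, add_zero]

/-- For increasing `x` with values in `[0, 1)`, the length of the counterclockwise arc of `ℝ/ℤ`
from `x b` to `x a`; the arc from a point to itself is the full circle. -/
def cyclicGap {N : ℕ} (x : Fin N → ℝ) (a b : Fin N) : ℝ :=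
  x a - x b + if a ≤ b then 1 else 0

lemma cyclicGap_of_lt {N : ℕ} (x : Fin N → ℝ) {a b : Fin N} (h : b < a) :
    cyclicGap x a b = x a - x b := by
  simp [cyclicGap, h.not_ge]

lemma cyclicGap_of_le {N : ℕ} (x : Fin N → ℝ) {a b : Fin N} (h : a ≤ b) :
    cyclicGap x a b = 1 - (x b - x a) := by
  rw [cyclicGap, if_pos h]
  ring

def cyclicGaps {n : ℕ} (x : Fin (n + 1) → ℝ) (c : Fin (n + 1)) (j : Fin n) : ℝ :=
  cyclicGap x (j.succ + c) c

lemma cyclicGaps_zero {n : ℕ} {x : Fin (n + 1) → ℝ} (hx : x 0 = 0) :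
    cyclicGaps x 0 = fun j => x j.succ := by
  funext j
  simp [cyclicGaps, cyclicGap, hx, Fin.succ_ne_zero]

lemma shiftMap_cyclicGaps (m : ℕ) (hn : 0 < m + 1) (x : Fin (m + 2) → ℝ) (c : Fin (m + 2)) :
    shiftMap (m + 1) hn (cyclicGaps x c) = cyclicGaps x (c - 1) := by
  have hlast : cyclicGaps x c ⟨m + 1 - 1, Nat.sub_lt hn one_pos⟩ = cyclicGap x (c - 1) c := by
    rw [show (⟨m + 1 - 1, _⟩ : Fin (m + 1)) = Fin.last m from Fin.ext (by simp), cyclicGaps,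
      Fin.succ_last, eq_neg_of_add_eq_zero_left (Fin.last_add_one _), neg_add_eq_sub]
  funext j
  cases j using Fin.cases with
  | zero =>
    simp only [shiftMap, Fin.val_zero, if_true]
    rw [hlast, cyclicGaps, Fin.succ_zero_eq_one, add_sub_cancel, cyclicGap, cyclicGap,
      if_congr (Fin.sub_one_le_self_iff c) rfl rfl, if_congr Fin.le_sub_one_iff rfl rfl]
    by_cases hc : c = 0 <;> simp [hc]
    ring
  | succ k =>
    have hk : k.succ.succ + (c - 1) = k.castSucc.succ + c := by
      rw [← Fin.coeSucc_eq_succ (a := k.succ), ← Fin.succ_castSucc]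
      abel
    have hne : k.castSucc.succ + c ≠ c := by simp [Fin.succ_ne_zero]
    simp only [shiftMap, Fin.val_succ, Nat.add_one_ne_zero, if_false]
    rw [hlast, show (⟨k + 1 - 1, _⟩ : Fin (m + 1)) = k.castSucc from Fin.ext (by simp),
      cyclicGaps, cyclicGaps, hk, cyclicGap, cyclicGap, cyclicGap,
      if_congr (Fin.le_sub_one_iff_of_ne hne) rfl rfl, if_congr (Fin.sub_one_le_self_iff c) rfl rfl]
    by_cases hc : c = 0 <;> simp [hc] <;> ring

section

open Fin.NatCast

lemma shiftMap_iterate_cyclicGaps (m : ℕ) (hn : 0 < m + 1) (x : Fin (m + 2) → ℝ) (i : ℕ) :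
    (shiftMap (m + 1) hn)^[i] (cyclicGaps x 0) = cyclicGaps x (-(i : Fin (m + 2))) := by
  induction i with
  | zero => simp
  | succ i ih =>
    rw [Function.iterate_succ_apply', ih, shiftMap_cyclicGaps, Nat.cast_succ, neg_add,
      sub_eq_add_neg]

lemma sum_range_shiftMap_iterate {M : Type*} [AddCommMonoid M] (m : ℕ) (hn : 0 < m + 1)
    (x : Fin (m + 2) → ℝ) (F : ℝ → M) :
    ∑ i ∈ range (m + 2), ∑ j, F ((shiftMap (m + 1) hn)^[i] (cyclicGaps x 0) j) =
      ∑ c, ∑ j : Fin (m + 1), F (cyclicGap x (j.succ + c) c) := by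
  rw [sum_range]
  exact Fintype.sum_equiv (Equiv.neg _) _ _ fun i => by
    simp [shiftMap_iterate_cyclicGaps, cyclicGaps]

end

/-- Crucial observation: for `φ ∈ S_n` with `φ₀ = 0`, the multiset
`{σ_nⁱ(φ)_j : 0 ≤ i ≤ n, 1 ≤ j ≤ n}` equals the multiset sum over all pairs `0 ≤ k < l ≤ n`
of the two-element multisets `{φ_l - φ_k, 1 - (φ_l - φ_k)}`. -/
theorem crucial_observation (n : ℕ) (hn : 0 < n) (φ : Fin n → ℝ)
    (Φ : Fin (n + 1) → ℝ)
    (hΦ0 : Φ 0 = 0)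
    (hΦ : ∀ i : Fin (n + 1), ∀ h : 0 < i.1, Φ i = φ ⟨i.1 - 1, by omega⟩) :
    ((Finset.range (n + 1)).val.bind fun i =>
        (Finset.univ.val : Multiset (Fin n)).map fun j => (shiftMap n hn)^[i] φ j) =
      ((Finset.univ.filter fun p : Fin (n + 1) × Fin (n + 1) => p.1 < p.2).val.bind
        fun p => {Φ p.2 - Φ p.1, 1 - (Φ p.2 - Φ p.1)}) := by
  obtain ⟨m, rfl⟩ := Nat.exists_eq_add_one_of_ne_zero hn.ne'
  have hφ : φ = cyclicGaps Φ 0 := by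
    rw [cyclicGaps_zero hΦ0]
    funext j
    exact (hΦ j.succ j.succ_pos).symm
  calc _ = ∑ i ∈ range (m + 2), ∑ j,
          ({(shiftMap (m + 1) hn)^[i] (cyclicGaps Φ 0) j} : Multiset ℝ) := by
        simp_rw [hφ, ← Multiset.bind_singleton]
        rfl
    _ = ∑ c, ∑ a ∈ univ.filter (· ≠ c), ({cyclicGap Φ a c} : Multiset ℝ) := by
        rw [sum_range_shiftMap_iterate]
        exact sum_congr rfl fun c _ => Fin.sum_succ_add_eq_sum_ne (fun a => {cyclicGap Φ a c}) c
    _ = ∑ p ∈ univ.filter (fun p : Fin (m + 2) × Fin (m + 2) => p.1 < p.2),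
          ({cyclicGap Φ p.2 p.1} + {cyclicGap Φ p.1 p.2} : Multiset ℝ) :=
        sum_sum_ne_eq_sum_lt _
    _ = _ := sum_congr rfl fun p hp => by
        have hlt : p.1 < p.2 := (mem_filter.mp hp).2
        rw [cyclicGap_of_lt Φ hlt, cyclicGap_of_le Φ hlt.le, Multiset.singleton_add]
        rfl
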